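/- arXiv:2506.04176 — 3 statements merged into one kernel-verified Lean document; each statement's English description precedes it below -/
import Mathlib

section
/- For every j ∈ ℤ, the mid-time convolutions of two adjacent interfaces satisfy |A^{½}_{j−1/2} − A^{½}_{j+1/2}| ≤ Δx·(sup |μ'|)·(1 + θ)·(1 + λ·L)·m. -/
open MeasureTheory

noncomputable section

/-- minmod limiter of three arguments. -/
def minmod3 (a b c : ℝ) : ℝ :=
  if 0 < a ∧ 0 < b ∧ 0 < c then min a (min b c)
  else if a < 0 ∧ b < 0 ∧ c < 0 then max a (max b c)
  else 0

/-- MUSCL slopes `σ_j = 2θ·minmod(ρ_j − ρ_{j−1}, (ρ_{j+1} − ρ_{j−1})/2, ρ_{j+1} − ρ_j)`. -/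
def slp (θ : ℝ) (ρ : ℤ → ℝ) (j : ℤ) : ℝ :=
  2 * θ * minmod3 (ρ j - ρ (j - 1)) ((ρ (j + 1) - ρ (j - 1)) / 2) (ρ (j + 1) - ρ j)

/-- left interface value `ρ⁻_{j+1/2} = ρ_j + σ_j/2`. -/
def intL (θ : ℝ) (ρ : ℤ → ℝ) (j : ℤ) : ℝ := ρ j + slp θ ρ j / 2

/-- right interface value `ρ⁺_{j−1/2} = ρ_j − σ_j/2`. -/
def intR (θ : ℝ) (ρ : ℤ → ℝ) (j : ℤ) : ℝ := ρ j - slp θ ρ j / 2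

/-- discrete convolution `A_j = Δx·Σ_l μ((j−l)Δx)·ρ_l`. -/
def Adisc (μ : ℝ → ℝ) (Δx : ℝ) (ρ : ℤ → ℝ) (j : ℤ) : ℝ :=
  Δx * ∑' l : ℤ, μ (((j : ℝ) - (l : ℝ)) * Δx) * ρ l

/-- `s_j = θ·(A_{j+1} − A_{j−1})`. -/
def sdisc (μ : ℝ → ℝ) (θ Δx : ℝ) (ρ : ℤ → ℝ) (j : ℤ) : ℝ :=
  θ * (Adisc μ Δx ρ (j + 1) - Adisc μ Δx ρ (j - 1))

/-- `A⁻_{j+1/2} = A_j + s_j/2`. -/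
def AdiscL (μ : ℝ → ℝ) (θ Δx : ℝ) (ρ : ℤ → ℝ) (j : ℤ) : ℝ :=
  Adisc μ Δx ρ j + sdisc μ θ Δx ρ j / 2

/-- `A⁺_{j−1/2} = A_j − s_j/2`. -/
def AdiscR (μ : ℝ → ℝ) (θ Δx : ℝ) (ρ : ℤ → ℝ) (j : ℤ) : ℝ :=
  Adisc μ Δx ρ j - sdisc μ θ Δx ρ j / 2

/-- mid-time value `ρ^{½,−}_{j+1/2}`. -/
def midL (f : ℝ → ℝ → ℝ) (μ : ℝ → ℝ) (θ lam Δx : ℝ) (ρ : ℤ → ℝ) (j : ℤ) : ℝ :=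
  intL θ ρ j - lam / 2 *
    (f (intL θ ρ j) (AdiscL μ θ Δx ρ j) - f (intR θ ρ j) (AdiscR μ θ Δx ρ j))

/-- mid-time value `ρ^{½,+}_{j−1/2}`. -/
def midR (f : ℝ → ℝ → ℝ) (μ : ℝ → ℝ) (θ lam Δx : ℝ) (ρ : ℤ → ℝ) (j : ℤ) : ℝ :=
  intR θ ρ j - lam / 2 *
    (f (intL θ ρ j) (AdiscL μ θ Δx ρ j) - f (intR θ ρ j) (AdiscR μ θ Δx ρ j))

/-- mid-time convolution `A^{½}_{j+1/2}`. -/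
def Amid (f : ℝ → ℝ → ℝ) (μ : ℝ → ℝ) (θ lam Δx : ℝ) (ρ : ℤ → ℝ) (j : ℤ) : ℝ :=
  Δx / 2 * ∑' l : ℤ,
    (μ (((j : ℝ) + 1 - (l : ℝ)) * Δx) * midR f μ θ lam Δx ρ l +
     μ (((j : ℝ) - (l : ℝ)) * Δx) * midL f μ θ lam Δx ρ l)

/-- Lax–Friedrichs type numerical flux `F(u,v,A)`. -/
def numFlux (f : ℝ → ℝ → ℝ) (α lam u v A : ℝ) : ℝ :=
  (f u A + f v A) / 2 - α * (v - u) / (2 * lam)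

/-- MUSCL–Hancock update `ρ'_j`. -/
def mhUpdate (f : ℝ → ℝ → ℝ) (μ : ℝ → ℝ) (θ α lam Δx : ℝ) (ρ : ℤ → ℝ) (j : ℤ) : ℝ :=
  ρ j - lam *
    (numFlux f α lam (midL f μ θ lam Δx ρ j) (midR f μ θ lam Δx ρ (j + 1))
        (Amid f μ θ lam Δx ρ j) -
     numFlux f α lam (midL f μ θ lam Δx ρ (j - 1)) (midR f μ θ lam Δx ρ j)
        (Amid f μ θ lam Δx ρ (j - 1)))


/-- MVT Lipschitz bound. -/
lemma lip_of_deriv_bound {g : ℝ → ℝ} (hg : Differentiable ℝ g) {C : ℝ}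
    (hC : ∀ x, |deriv g x| ≤ C) (x y : ℝ) : |g x - g y| ≤ C * |x - y| := by
  have := Convex.norm_image_sub_le_of_norm_deriv_le (f := g) (s := Set.univ)
    (fun z _ => hg z) (fun z _ => by simpa using hC z) convex_univ
    (Set.mem_univ y) (Set.mem_univ x)
  simpa [Real.norm_eq_abs] using this

/-- minmod3 bound. -/
lemma abs_minmod3_le {a b c r : ℝ} (hr : 0 ≤ r) (ha : a ≤ r) (hc : -c ≤ r) :
    |minmod3 a b c| ≤ r := by
  unfold minmod3
  split_ifs with h1 h2
  · rw [abs_of_pos (lt_min h1.1 (lt_min h1.2.1 h1.2.2))]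
    exact le_trans (min_le_left _ _) ha
  · rw [abs_of_neg (max_lt h2.1 (max_lt h2.2.1 h2.2.2))]
    have : c ≤ max a (max b c) := le_max_of_le_right (le_max_right _ _)
    linarith
  · simpa using hr

/-- slope bound. -/
lemma abs_half_slp_le {θ : ℝ} (hθ : 0 ≤ θ) {ρ : ℤ → ℝ} (hρ : ∀ j, 0 ≤ ρ j) (j : ℤ) :
    |slp θ ρ j / 2| ≤ θ * ρ j := by
  have hm : |minmod3 (ρ j - ρ (j - 1)) ((ρ (j + 1) - ρ (j - 1)) / 2) (ρ (j + 1) - ρ j)| ≤ ρ j :=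
    abs_minmod3_le (hρ j) (by linarith [hρ (j-1)]) (by linarith [hρ (j+1)])
  have : slp θ ρ j / 2
      = θ * minmod3 (ρ j - ρ (j - 1)) ((ρ (j + 1) - ρ (j - 1)) / 2) (ρ (j + 1) - ρ j) := by
    rw [slp]; ring
  rw [this, abs_mul, abs_of_nonneg hθ]
  exact mul_le_mul_of_nonneg_left hm hθ

/-- interface value bounds. -/
lemma abs_intL_le {θ : ℝ} (hθ : 0 ≤ θ) {ρ : ℤ → ℝ} (hρ : ∀ j, 0 ≤ ρ j) (j : ℤ) :
    |intL θ ρ j| ≤ (1 + θ) * ρ j := by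
  have h := abs_half_slp_le hθ hρ j
  calc |intL θ ρ j| ≤ |ρ j| + |slp θ ρ j / 2| := abs_add_le _ _
    _ ≤ (1 + θ) * ρ j := by rw [abs_of_nonneg (hρ j)]; linarith

lemma abs_intR_le {θ : ℝ} (hθ : 0 ≤ θ) {ρ : ℤ → ℝ} (hρ : ∀ j, 0 ≤ ρ j) (j : ℤ) :
    |intR θ ρ j| ≤ (1 + θ) * ρ j := by
  have h := abs_half_slp_le hθ hρ j
  calc |intR θ ρ j| ≤ |ρ j| + |slp θ ρ j / 2| := abs_sub _ _
    _ ≤ (1 + θ) * ρ j := by rw [abs_of_nonneg (hρ j)]; linarith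

set_option maxHeartbeats 1600000

/-- bound on the difference of mid-time convolutions at adjacent interfaces. -/
theorem stmt15 (f : ℝ → ℝ → ℝ) (μ : ℝ → ℝ) (Δx Δt lam θ L Cμ' : ℝ)
    (hΔx : 0 < Δx) (hΔt : 0 < Δt) (hlam : lam = Δt / Δx)
    (hθ0 : 0 ≤ θ) (hθ1 : θ ≤ 1 / 2)
    (hf : ContDiff ℝ 2 (Function.uncurry f)) (hf0 : ∀ A : ℝ, f 0 A = 0)
    (hL : ∀ r A : ℝ, |deriv (fun x => f x A) r| ≤ L)
    (hμ : ContDiff ℝ 2 μ) (hμc : HasCompactSupport μ)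
    (hCμ' : ∀ x : ℝ, |deriv μ x| ≤ Cμ')
    (ρ : ℤ → ℝ) (hρ : ∀ j : ℤ, 0 ≤ ρ j) (hsum : Summable ρ) (j : ℤ) :
    |Amid f μ θ lam Δx ρ (j - 1) - Amid f μ θ lam Δx ρ j| ≤
      Δx * Cμ' * (1 + θ) * (1 + lam * L) * (Δx * ∑' l : ℤ, ρ l) := by
  classical
  -- basic nonnegativities
  have hL0 : 0 ≤ L := le_trans (abs_nonneg _) (hL 0 0)
  have hC0 : 0 ≤ Cμ' := le_trans (abs_nonneg _) (hCμ' 0)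
  have hlam0 : 0 ≤ lam := by rw [hlam]; positivity
  -- f is Lipschitz in its first variable, with f 0 A = 0
  have hfd : ∀ A : ℝ, Differentiable ℝ (fun x => f x A) := by
    intro A
    have h1 : Differentiable ℝ (Function.uncurry f) :=
      hf.differentiable (by norm_num)
    have h2 : Differentiable ℝ (fun x : ℝ => (x, A)) :=
      differentiable_id.prodMk (differentiable_const A)
    exact h1.comp h2
  have hfb : ∀ r A : ℝ, |f r A| ≤ L * |r| := by
    intro r A
    have := lip_of_deriv_bound (hfd A) (fun x => hL x A) r 0
    simpa [hf0 A] using this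
  -- μ is Lipschitz and bounded
  have hμd : Differentiable ℝ μ := hμ.differentiable (by norm_num)
  have hμlip : ∀ x y : ℝ, |μ x - μ y| ≤ Cμ' * |x - y| :=
    fun x y => lip_of_deriv_bound hμd hCμ' x y
  obtain ⟨Cμ, hCμ⟩ := hμc.exists_bound_of_continuous hμ.continuous
  have hCμb : ∀ x, |μ x| ≤ Cμ := fun x => by simpa [Real.norm_eq_abs] using hCμ x
  -- mid-time value bounds
  set K : ℝ := (1 + θ) * (1 + lam * L) with hKdef
  have hK0 : 0 ≤ K := by positivity
  have hflux : ∀ l : ℤ,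
      |f (intL θ ρ l) (AdiscL μ θ Δx ρ l) - f (intR θ ρ l) (AdiscR μ θ Δx ρ l)|
        ≤ 2 * L * (1 + θ) * ρ l := by
    intro l
    have h1 := hfb (intL θ ρ l) (AdiscL μ θ Δx ρ l)
    have h2 := hfb (intR θ ρ l) (AdiscR μ θ Δx ρ l)
    have h3 := abs_intL_le hθ0 hρ l
    have h4 := abs_intR_le hθ0 hρ l
    have h5 := abs_sub
      (f (intL θ ρ l) (AdiscL μ θ Δx ρ l)) (f (intR θ ρ l) (AdiscR μ θ Δx ρ l))
    nlinarith [abs_nonneg (intL θ ρ l), abs_nonneg (intR θ ρ l)]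
  have hmidL : ∀ l : ℤ, |midL f μ θ lam Δx ρ l| ≤ K * ρ l := by
    intro l
    have h1 := abs_intL_le hθ0 hρ l
    have h2 := hflux l
    have h3 : |midL f μ θ lam Δx ρ l| ≤ |intL θ ρ l| + lam / 2 *
        |f (intL θ ρ l) (AdiscL μ θ Δx ρ l) - f (intR θ ρ l) (AdiscR μ θ Δx ρ l)| := by
      rw [midL]
      calc |intL θ ρ l - lam / 2 * (f (intL θ ρ l) (AdiscL μ θ Δx ρ l)
              - f (intR θ ρ l) (AdiscR μ θ Δx ρ l))|
          ≤ |intL θ ρ l| + |lam / 2 * (f (intL θ ρ l) (AdiscL μ θ Δx ρ l)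
              - f (intR θ ρ l) (AdiscR μ θ Δx ρ l))| := abs_sub _ _
        _ = |intL θ ρ l| + lam / 2 * |f (intL θ ρ l) (AdiscL μ θ Δx ρ l)
              - f (intR θ ρ l) (AdiscR μ θ Δx ρ l)| := by
            rw [abs_mul, abs_of_nonneg (by linarith : (0:ℝ) ≤ lam / 2)]
    have : lam / 2 * |f (intL θ ρ l) (AdiscL μ θ Δx ρ l)
        - f (intR θ ρ l) (AdiscR μ θ Δx ρ l)| ≤ lam / 2 * (2 * L * (1 + θ) * ρ l) :=
      mul_le_mul_of_nonneg_left h2 (by linarith)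
    rw [hKdef]; nlinarith
  have hmidR : ∀ l : ℤ, |midR f μ θ lam Δx ρ l| ≤ K * ρ l := by
    intro l
    have h1 := abs_intR_le hθ0 hρ l
    have h2 := hflux l
    have h3 : |midR f μ θ lam Δx ρ l| ≤ |intR θ ρ l| + lam / 2 *
        |f (intL θ ρ l) (AdiscL μ θ Δx ρ l) - f (intR θ ρ l) (AdiscR μ θ Δx ρ l)| := by
      rw [midR]
      calc |intR θ ρ l - lam / 2 * (f (intL θ ρ l) (AdiscL μ θ Δx ρ l)
              - f (intR θ ρ l) (AdiscR μ θ Δx ρ l))|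
          ≤ |intR θ ρ l| + |lam / 2 * (f (intL θ ρ l) (AdiscL μ θ Δx ρ l)
              - f (intR θ ρ l) (AdiscR μ θ Δx ρ l))| := abs_sub _ _
        _ = |intR θ ρ l| + lam / 2 * |f (intL θ ρ l) (AdiscL μ θ Δx ρ l)
              - f (intR θ ρ l) (AdiscR μ θ Δx ρ l)| := by
            rw [abs_mul, abs_of_nonneg (by linarith : (0:ℝ) ≤ lam / 2)]
    have : lam / 2 * |f (intL θ ρ l) (AdiscL μ θ Δx ρ l)
        - f (intR θ ρ l) (AdiscR μ θ Δx ρ l)| ≤ lam / 2 * (2 * L * (1 + θ) * ρ l) :=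
      mul_le_mul_of_nonneg_left h2 (by linarith)
    rw [hKdef]; nlinarith
  -- the summands of Amid
  set g : ℤ → ℤ → ℝ := fun k l =>
    μ (((k : ℝ) + 1 - (l : ℝ)) * Δx) * midR f μ θ lam Δx ρ l +
    μ (((k : ℝ) - (l : ℝ)) * Δx) * midL f μ θ lam Δx ρ l with hgdef
  have hAmid : ∀ k : ℤ, Amid f μ θ lam Δx ρ k = Δx / 2 * ∑' l : ℤ, g k l := fun k => rfl
  -- summability
  have hgb : ∀ k l : ℤ, |g k l| ≤ 2 * Cμ * K * ρ l := by
    intro k l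
    have h1 : |μ (((k : ℝ) + 1 - (l : ℝ)) * Δx) * midR f μ θ lam Δx ρ l|
        ≤ Cμ * (K * ρ l) := by
      rw [abs_mul]
      exact mul_le_mul (hCμb _) (hmidR l) (abs_nonneg _)
        (le_trans (abs_nonneg _) (hCμb 0))
    have h2 : |μ (((k : ℝ) - (l : ℝ)) * Δx) * midL f μ θ lam Δx ρ l|
        ≤ Cμ * (K * ρ l) := by
      rw [abs_mul]
      exact mul_le_mul (hCμb _) (hmidL l) (abs_nonneg _)
        (le_trans (abs_nonneg _) (hCμb 0))
    calc |g k l| ≤ |μ (((k : ℝ) + 1 - (l : ℝ)) * Δx) * midR f μ θ lam Δx ρ l| +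
          |μ (((k : ℝ) - (l : ℝ)) * Δx) * midL f μ θ lam Δx ρ l| := abs_add_le _ _
      _ ≤ 2 * Cμ * K * ρ l := by linarith
  have hgsum : ∀ k : ℤ, Summable (g k) := by
    intro k
    refine Summable.of_abs ?_
    exact Summable.of_nonneg_of_le (fun l => abs_nonneg _) (hgb k) (hsum.mul_left _)
  -- the difference of summands
  set h : ℤ → ℝ := fun l => g (j - 1) l - g j l with hhdef
  have hsumh : Summable h := (hgsum (j - 1)).sub (hgsum j)
  have hdiff : Amid f μ θ lam Δx ρ (j - 1) - Amid f μ θ lam Δx ρ j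
      = Δx / 2 * ∑' l : ℤ, h l := by
    rw [hAmid, hAmid, ← mul_sub, ← Summable.tsum_sub (hgsum (j - 1)) (hgsum j)]
  -- pointwise bound on h
  have hhb : ∀ l : ℤ, |h l| ≤ Cμ' * Δx * (2 * K) * ρ l := by
    intro l
    have e1 : (((j - 1 : ℤ) : ℝ) + 1 - (l : ℝ)) * Δx = ((j : ℝ) - (l : ℝ)) * Δx := by
      push_cast; ring
    have e2 : (((j - 1 : ℤ) : ℝ) - (l : ℝ)) * Δx = ((j : ℝ) - 1 - (l : ℝ)) * Δx := by
      push_cast; ring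
    have hl : h l = (μ (((j : ℝ) - (l : ℝ)) * Δx) - μ (((j : ℝ) + 1 - (l : ℝ)) * Δx)) *
          midR f μ θ lam Δx ρ l +
        (μ (((j : ℝ) - 1 - (l : ℝ)) * Δx) - μ (((j : ℝ) - (l : ℝ)) * Δx)) *
          midL f μ θ lam Δx ρ l := by
      rw [hhdef]; simp only [hgdef, e1, e2]; ring
    have hm1 : |μ (((j : ℝ) - (l : ℝ)) * Δx) - μ (((j : ℝ) + 1 - (l : ℝ)) * Δx)|
        ≤ Cμ' * Δx := by
      have := hμlip (((j : ℝ) - (l : ℝ)) * Δx) (((j : ℝ) + 1 - (l : ℝ)) * Δx)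
      have e : |((j : ℝ) - (l : ℝ)) * Δx - ((j : ℝ) + 1 - (l : ℝ)) * Δx| = Δx := by
        rw [show ((j : ℝ) - (l : ℝ)) * Δx - ((j : ℝ) + 1 - (l : ℝ)) * Δx = -Δx by ring,
          abs_neg, abs_of_pos hΔx]
      rw [e] at this; exact this
    have hm2 : |μ (((j : ℝ) - 1 - (l : ℝ)) * Δx) - μ (((j : ℝ) - (l : ℝ)) * Δx)|
        ≤ Cμ' * Δx := by
      have := hμlip (((j : ℝ) - 1 - (l : ℝ)) * Δx) (((j : ℝ) - (l : ℝ)) * Δx)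
      have e : |((j : ℝ) - 1 - (l : ℝ)) * Δx - ((j : ℝ) - (l : ℝ)) * Δx| = Δx := by
        rw [show ((j : ℝ) - 1 - (l : ℝ)) * Δx - ((j : ℝ) - (l : ℝ)) * Δx = -Δx by ring,
          abs_neg, abs_of_pos hΔx]
      rw [e] at this; exact this
    have hb1 := hmidR l
    have hb2 := hmidL l
    rw [hl]
    calc |(μ (((j : ℝ) - (l : ℝ)) * Δx) - μ (((j : ℝ) + 1 - (l : ℝ)) * Δx)) *
          midR f μ θ lam Δx ρ l +
        (μ (((j : ℝ) - 1 - (l : ℝ)) * Δx) - μ (((j : ℝ) - (l : ℝ)) * Δx)) *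
          midL f μ θ lam Δx ρ l|
        ≤ |μ (((j : ℝ) - (l : ℝ)) * Δx) - μ (((j : ℝ) + 1 - (l : ℝ)) * Δx)| *
            |midR f μ θ lam Δx ρ l| +
          |μ (((j : ℝ) - 1 - (l : ℝ)) * Δx) - μ (((j : ℝ) - (l : ℝ)) * Δx)| *
            |midL f μ θ lam Δx ρ l| := by
          refine le_trans (abs_add_le _ _) ?_
          rw [abs_mul, abs_mul]
      _ ≤ Cμ' * Δx * (K * ρ l) + Cμ' * Δx * (K * ρ l) := by
          have hcd : (0:ℝ) ≤ Cμ' * Δx := mul_nonneg hC0 hΔx.le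
          have t1 := mul_le_mul hm1 hb1 (abs_nonneg _) hcd
          have t2 := mul_le_mul hm2 hb2 (abs_nonneg _) hcd
          linarith
      _ = Cμ' * Δx * (2 * K) * ρ l := by ring
  -- put it together
  have habs : Summable fun l => |h l| :=
    Summable.of_nonneg_of_le (fun l => abs_nonneg _) hhb (hsum.mul_left _)
  have htsum : |∑' l : ℤ, h l| ≤ Cμ' * Δx * (2 * K) * ∑' l : ℤ, ρ l := by
    calc |∑' l : ℤ, h l| ≤ ∑' l : ℤ, |h l| := by
          have := norm_tsum_le_tsum_norm (f := h)
            (by simpa [Real.norm_eq_abs] using habs)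
          simpa [Real.norm_eq_abs] using this
      _ ≤ ∑' l : ℤ, Cμ' * Δx * (2 * K) * ρ l := Summable.tsum_le_tsum hhb habs (hsum.mul_left _)
      _ = Cμ' * Δx * (2 * K) * ∑' l : ℤ, ρ l := tsum_mul_left
  rw [hdiff, abs_mul, abs_of_nonneg (by linarith : (0:ℝ) ≤ Δx / 2)]
  have hfinal : Δx / 2 * |∑' l : ℤ, h l| ≤ Δx / 2 * (Cμ' * Δx * (2 * K) * ∑' l : ℤ, ρ l) :=
    mul_le_mul_of_nonneg_left htsum (by linarith)
  calc Δx / 2 * |∑' l : ℤ, h l| ≤ Δx / 2 * (Cμ' * Δx * (2 * K) * ∑' l : ℤ, ρ l) := hfinal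
    _ = Δx * Cμ' * (1 + θ) * (1 + lam * L) * (Δx * ∑' l : ℤ, ρ l) := by
        rw [hKdef]; ring
end
end

section
/- For every j ∈ ℤ: (i) the second differences of the discrete convolution satisfy |A_{j+1} − 2·A_j + A_{j−1}| ≤ Δx²·(sup |μ''|)·m; (ii) the second differences of the slope corrections satisfy |s_{j+1} − 2·s_j + s_{j−1}| ≤ 2θ·Δx²·(sup |μ''|)·m; and (iii) consequently |A⁻_{j+3/2} − 2·A⁻_{j+1/2} + A⁻_{j−1/2}| ≤ (1 + θ)·Δx²·(sup |μ''|)·m. -/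
/-!
The second difference of `A` at `j` is `Δx · Σ_l δ²μ((j - l)Δx) · ρ_l` with
`δ²μ(x) = μ(x + Δx) - 2μ(x) + μ(x - Δx)`. Since `μ'` is `sup |μ''|`-Lipschitz,
`|δ²μ| ≤ sup |μ''| · Δx²`, and summing against `ρ ≥ 0` gives (i). The second differences of `s`
and `A⁻` are linear combinations of those of `A` (`θ` times the difference of two shifted ones,
resp. those of `A` plus half those of `s`), so (ii) and (iii) follow by the triangle inequality.
-/

open MeasureTheory

noncomputable section

open scoped NNReal

def secondDiff (u : ℤ → ℝ) (j : ℤ) : ℝ := u (j + 1) - 2 * u j + u (j - 1)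

theorem abs_second_diff_le_of_lipschitzWith_deriv {f : ℝ → ℝ} {K : ℝ≥0}
    (hf : Differentiable ℝ f) (hf' : LipschitzWith K (deriv f)) (x h : ℝ) :
    |f (x + h) - 2 * f x + f (x - h)| ≤ K * h ^ 2 := by
  wlog hh : 0 ≤ h generalizing h
  · convert this (-h) (by linarith) using 2 <;> ring_nf
  set g : ℝ → ℝ := fun t => f (x + t) - 2 * f x + f (x - t)
  have hg : ∀ t, HasDerivAt g (deriv f (x + t) - deriv f (x - t)) t := by
    intro t
    have h₁ := (hf (x + t)).hasDerivAt.comp t ((hasDerivAt_id t).const_add x)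
    have h₂ := (hf (x - t)).hasDerivAt.comp t ((hasDerivAt_id t).const_sub x)
    exact ((h₁.sub_const (2 * f x)).add h₂).congr_deriv (by ring)
  -- compare `g` with `K t²`, whose derivative `2 K t` dominates `|g'(t)| ≤ K |2t|`
  refine image_norm_le_of_norm_deriv_right_le_deriv_boundary (f := g) (a := 0) (b := h)
    (B := fun t => K * t ^ 2) (B' := fun t => K * (2 * t))
    (fun t _ => (hg t).continuousAt.continuousWithinAt) (fun t _ => (hg t).hasDerivWithinAt)
    (by simp [g]; ring) (fun t => by simpa using (hasDerivAt_pow 2 t).const_mul (K : ℝ)) ?_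
    ⟨hh, le_rfl⟩
  rintro t ⟨ht, -⟩
  calc ‖deriv f (x + t) - deriv f (x - t)‖ ≤ K * dist (x + t) (x - t) := hf'.dist_le_mul _ _
    _ = K * (2 * t) := by rw [Real.dist_eq, abs_of_nonneg (by linarith)]; ring

theorem lipschitzWith_deriv_of_abs_iteratedDeriv_two_le {f : ℝ → ℝ} {C : ℝ≥0}
    (hf : ContDiff ℝ 2 f) (hC : ∀ x, |iteratedDeriv 2 f x| ≤ C) : LipschitzWith C (deriv f) := by
  have hf' : ContDiff ℝ 1 (deriv f) := hf.iterate_deriv' 1 1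
  refine lipschitzWith_of_nnnorm_deriv_le (hf'.differentiable one_ne_zero) fun x => ?_
  rw [← NNReal.coe_le_coe, coe_nnnorm, ← iteratedDeriv_one (f := deriv f), ← iteratedDeriv_succ']
  exact hC x

section Tsum

variable {ι : Type*} {g ρ : ι → ℝ} {K : ℝ}

theorem summable_mul_of_abs_le (hg : ∀ i, |g i| ≤ K) (hρ : ∀ i, 0 ≤ ρ i) (hsum : Summable ρ) :
    Summable fun i => g i * ρ i :=
  (hsum.mul_left K).of_norm_bounded fun i => by
    rw [norm_mul, Real.norm_of_nonneg (hρ i)]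
    exact mul_le_mul_of_nonneg_right (hg i) (hρ i)

theorem abs_tsum_mul_le_of_abs_le (hg : ∀ i, |g i| ≤ K) (hρ : ∀ i, 0 ≤ ρ i)
    (hsum : Summable ρ) : |∑' i, g i * ρ i| ≤ K * ∑' i, ρ i := by
  have hgρ := summable_mul_of_abs_le hg hρ hsum
  calc |∑' i, g i * ρ i| ≤ ∑' i, |g i * ρ i| := by
        simpa only [← Real.norm_eq_abs] using norm_tsum_le_tsum_norm hgρ.norm
    _ ≤ ∑' i, K * ρ i := by
        refine hgρ.abs.tsum_le_tsum (fun i => ?_) (hsum.mul_left K)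
        rw [abs_mul, abs_of_nonneg (hρ i)]
        exact mul_le_mul_of_nonneg_right (hg i) (hρ i)
    _ = K * ∑' i, ρ i := tsum_mul_left

end Tsum

section Convolution

variable {μ : ℝ → ℝ} {Δx : ℝ} {ρ : ℤ → ℝ}

theorem secondDiff_Adisc {B : ℝ} (hB : ∀ x, |μ x| ≤ B) (hρ : ∀ l, 0 ≤ ρ l) (hsum : Summable ρ)
    (j : ℤ) :
    secondDiff (Adisc μ Δx ρ) j = Δx * ∑' l : ℤ,
      (μ ((j - l) * Δx + Δx) - 2 * μ ((j - l) * Δx) + μ ((j - l) * Δx - Δx)) * ρ l := by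
  set x : ℤ → ℝ := fun l => (j - l) * Δx
  have hS : ∀ c : ℝ, HasSum (fun l => μ (x l + c) * ρ l) (∑' l, μ (x l + c) * ρ l) :=
    fun c => (summable_mul_of_abs_le (fun l => hB _) hρ hsum).hasSum
  have hA : ∀ (i : ℤ) (c : ℝ), ((i - j : ℤ) : ℝ) * Δx = c →
      Adisc μ Δx ρ i = Δx * ∑' l, μ (x l + c) * ρ l := by
    rintro i c rfl
    refine congrArg (Δx * ·) (tsum_congr fun l => ?_)
    congr 2
    push_cast
    ring
  have hcomb := (((hS Δx).sub ((hS 0).mul_left 2)).add (hS (-Δx))).tsum_eq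
  simp only [add_zero, ← sub_eq_add_neg, ← mul_assoc, ← sub_mul, ← add_mul] at hcomb
  rw [secondDiff, hA (j + 1) Δx (by push_cast; ring), hA j 0 (by simp),
    hA (j - 1) (-Δx) (by push_cast; ring), hcomb]
  simp only [add_zero, ← sub_eq_add_neg]
  ring

theorem abs_secondDiff_Adisc_le {K : ℝ≥0} {B : ℝ} (hΔx : 0 ≤ Δx) (hμ : Differentiable ℝ μ)
    (hμ' : LipschitzWith K (deriv μ)) (hB : ∀ x, |μ x| ≤ B) (hρ : ∀ l, 0 ≤ ρ l)
    (hsum : Summable ρ) (j : ℤ) :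
    |secondDiff (Adisc μ Δx ρ) j| ≤ Δx ^ 2 * K * (Δx * ∑' l : ℤ, ρ l) := by
  rw [secondDiff_Adisc hB hρ hsum, abs_mul, abs_of_nonneg hΔx]
  calc Δx * |∑' l : ℤ,
        (μ ((j - l) * Δx + Δx) - 2 * μ ((j - l) * Δx) + μ ((j - l) * Δx - Δx)) * ρ l|
      ≤ Δx * (K * Δx ^ 2 * ∑' l : ℤ, ρ l) := by
        gcongr
        exact abs_tsum_mul_le_of_abs_le
          (fun l => abs_second_diff_le_of_lipschitzWith_deriv hμ hμ' _ _) hρ hsum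
    _ = Δx ^ 2 * K * (Δx * ∑' l : ℤ, ρ l) := by ring

variable (μ) (θ Δx : ℝ) (ρ) (j : ℤ)

theorem secondDiff_sdisc : secondDiff (sdisc μ θ Δx ρ) j =
    θ * (secondDiff (Adisc μ Δx ρ) (j + 1) - secondDiff (Adisc μ Δx ρ) (j - 1)) := by
  simp only [secondDiff, sdisc, add_sub_cancel_right, sub_add_cancel]
  ring

theorem secondDiff_AdiscL : secondDiff (AdiscL μ θ Δx ρ) j =
    secondDiff (Adisc μ Δx ρ) j + secondDiff (sdisc μ θ Δx ρ) j / 2 := by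
  simp only [secondDiff, AdiscL]
  ring

end Convolution

theorem stmt16_general (μ : ℝ → ℝ) (Δx θ Cμ'' : ℝ)
    (hΔx : 0 < Δx) (hθ0 : 0 ≤ θ)
    (hμ : ContDiff ℝ 2 μ) (hμc : HasCompactSupport μ)
    (hCμ'' : ∀ x : ℝ, |iteratedDeriv 2 μ x| ≤ Cμ'')
    (ρ : ℤ → ℝ) (hρ : ∀ j : ℤ, 0 ≤ ρ j) (hsum : Summable ρ) (j : ℤ) :
    |Adisc μ Δx ρ (j + 1) - 2 * Adisc μ Δx ρ j + Adisc μ Δx ρ (j - 1)| ≤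
      Δx ^ 2 * Cμ'' * (Δx * ∑' l : ℤ, ρ l) ∧
    |sdisc μ θ Δx ρ (j + 1) - 2 * sdisc μ θ Δx ρ j + sdisc μ θ Δx ρ (j - 1)| ≤
      2 * θ * Δx ^ 2 * Cμ'' * (Δx * ∑' l : ℤ, ρ l) ∧
    |AdiscL μ θ Δx ρ (j + 1) - 2 * AdiscL μ θ Δx ρ j + AdiscL μ θ Δx ρ (j - 1)| ≤
      (1 + θ) * Δx ^ 2 * Cμ'' * (Δx * ∑' l : ℤ, ρ l) := by
  lift Cμ'' to ℝ≥0 using (abs_nonneg _).trans (hCμ'' 0)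
  obtain ⟨B, hB⟩ := hμc.exists_bound_of_continuous hμ.continuous
  have hA (k : ℤ) : |secondDiff (Adisc μ Δx ρ) k| ≤ Δx ^ 2 * Cμ'' * (Δx * ∑' l : ℤ, ρ l) :=
    abs_secondDiff_Adisc_le hΔx.le (hμ.differentiable two_ne_zero)
      (lipschitzWith_deriv_of_abs_iteratedDeriv_two_le hμ hCμ'') hB hρ hsum k
  have hs : |secondDiff (sdisc μ θ Δx ρ) j| ≤ 2 * θ * Δx ^ 2 * Cμ'' * (Δx * ∑' l : ℤ, ρ l) := by
    rw [secondDiff_sdisc, abs_mul, abs_of_nonneg hθ0]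
    have := mul_le_mul_of_nonneg_left ((abs_sub _ _).trans (add_le_add (hA (j + 1)) (hA (j - 1))))
      hθ0
    linarith
  refine ⟨hA j, hs, ?_⟩
  change |secondDiff (AdiscL μ θ Δx ρ) j| ≤ _
  have := abs_add_le (secondDiff (Adisc μ Δx ρ) j) (secondDiff (sdisc μ θ Δx ρ) j / 2)
  rw [abs_div, abs_two] at this
  rw [secondDiff_AdiscL]
  linarith [hA j]

/-- second-difference bounds on the discrete convolutions. -/
theorem stmt16 (μ : ℝ → ℝ) (Δx θ Cμ'' : ℝ)
    (hΔx : 0 < Δx) (hθ0 : 0 ≤ θ) (hθ1 : θ ≤ 1 / 2)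
    (hμ : ContDiff ℝ 2 μ) (hμc : HasCompactSupport μ)
    (hCμ'' : ∀ x : ℝ, |iteratedDeriv 2 μ x| ≤ Cμ'')
    (ρ : ℤ → ℝ) (hρ : ∀ j : ℤ, 0 ≤ ρ j) (hsum : Summable ρ) (j : ℤ) :
    |Adisc μ Δx ρ (j + 1) - 2 * Adisc μ Δx ρ j + Adisc μ Δx ρ (j - 1)| ≤
      Δx ^ 2 * Cμ'' * (Δx * ∑' l : ℤ, ρ l) ∧
    |sdisc μ θ Δx ρ (j + 1) - 2 * sdisc μ θ Δx ρ j + sdisc μ θ Δx ρ (j - 1)| ≤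
      2 * θ * Δx ^ 2 * Cμ'' * (Δx * ∑' l : ℤ, ρ l) ∧
    |AdiscL μ θ Δx ρ (j + 1) - 2 * AdiscL μ θ Δx ρ j + AdiscL μ θ Δx ρ (j - 1)| ≤
      (1 + θ) * Δx ^ 2 * Cμ'' * (Δx * ∑' l : ℤ, ρ l) :=
  stmt16_general μ Δx θ Cμ'' hΔx hθ0 hμ hμc hCμ'' ρ hρ hsum j
end
end

section
/- For every j ∈ ℤ, the second differences of the mid-time convolutions satisfy |A^{½}_{j+3/2} − 2·A^{½}_{j+1/2} + A^{½}_{j−1/2}| ≤ Δx²·(sup |μ''|)·(1 + θ)·(1 + λ·L)·m. -/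
open MeasureTheory

noncomputable section

/-!
Taking the second difference in `j` moves it onto the kernel:
`A^{½}_{j+3/2} − 2A^{½}_{j+1/2} + A^{½}_{j−1/2}` is `Δx/2` times a series in which `ρ^{½,+}_{l−1/2}`
and `ρ^{½,−}_{l+1/2}` are weighted by central second differences of `μ` with step `Δx`, each at
most `Δx² sup |μ''|`. The limiter keeps the reconstructed values nonnegative, and with
`|f(r, A)| ≤ L |r|` this gives `|ρ^{½,+}_{l−1/2}| + |ρ^{½,−}_{l+1/2}| ≤ 2 (1 + λL) ρ_l`; summing
over `l` bounds the second difference by `Δx³ sup |μ''| (1 + λL) Σ ρ_l`.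
-/

theorem abs_sub_le_mul_of_abs_deriv_le {g : ℝ → ℝ} {K : ℝ} (hg : Differentiable ℝ g)
    (hK : ∀ x, |deriv g x| ≤ K) (a b : ℝ) : |g a - g b| ≤ K * |a - b| := by
  simpa only [Real.norm_eq_abs] using
    Convex.norm_image_sub_le_of_norm_deriv_le (fun x _ => hg x) (fun x _ => hK x) convex_univ
      (Set.mem_univ b) (Set.mem_univ a)

/-- The first difference `t ↦ μ (t + h) - μ t` has derivative `μ' (t + h) - μ' t`, of size at
most `C |h|`, so the mean value theorem applies to it over `[x - h, x]`. -/
theorem abs_sub_two_mul_add_le {μ : ℝ → ℝ} {C : ℝ} (hμ : ContDiff ℝ 2 μ)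
    (hC : ∀ x, |iteratedDeriv 2 μ x| ≤ C) (x h : ℝ) :
    |μ (x + h) - 2 * μ x + μ (x - h)| ≤ C * h ^ 2 := by
  have hμ' : ContDiff ℝ 1 (deriv μ) := hμ.iterate_deriv' 1 1
  have hμd : Differentiable ℝ μ := hμ.differentiable (by norm_num)
  have hlip : ∀ a b, |deriv μ a - deriv μ b| ≤ C * |a - b| :=
    abs_sub_le_mul_of_abs_deriv_le (hμ'.differentiable one_ne_zero) fun x => by
      simpa only [iteratedDeriv_succ, iteratedDeriv_zero] using hC x
  have hshift : Differentiable ℝ (fun t => μ (t + h)) :=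
    hμd.comp (differentiable_id.add_const h)
  have hφ : ∀ t, |deriv (fun t => μ (t + h) - μ t) t| ≤ C * |h| := fun t => by
    rw [deriv_fun_sub (hshift t) (hμd t), deriv_comp_add_const]
    simpa using hlip (t + h) t
  have hmvt := abs_sub_le_mul_of_abs_deriv_le (hshift.sub hμd) hφ x (x - h)
  calc |μ (x + h) - 2 * μ x + μ (x - h)|
      = |μ (x + h) - μ x - (μ (x - h + h) - μ (x - h))| := by ring_nf
    _ ≤ C * |h| * |x - (x - h)| := by simpa using hmvt
    _ = C * h ^ 2 := by rw [sub_sub_cancel, mul_assoc, abs_mul_abs_self, sq]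

theorem min_zero_le_minmod3 (a b c : ℝ) : min 0 c ≤ minmod3 a b c := by
  unfold minmod3
  split_ifs with hpos hneg
  · exact (min_le_left _ _).trans (le_min hpos.1.le (le_min hpos.2.1.le hpos.2.2.le))
  · exact (min_le_right _ _).trans ((le_max_right _ _).trans (le_max_right _ _))
  · exact min_le_left _ _

theorem minmod3_le_max_zero (a b c : ℝ) : minmod3 a b c ≤ max 0 a := by
  unfold minmod3
  split_ifs with hpos hneg
  · exact (min_le_left _ _).trans (le_max_right _ _)
  · exact (max_le hneg.1.le (max_le hneg.2.1.le hneg.2.2.le)).trans (le_max_left _ _)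
  · exact le_max_left _ _

theorem intL_add_intR (θ : ℝ) (ρ : ℤ → ℝ) (i : ℤ) : intL θ ρ i + intR θ ρ i = 2 * ρ i := by
  unfold intL intR
  ring

section Reconstruction

variable {θ : ℝ} {ρ : ℤ → ℝ}

/-- The limited slope keeps `ρ⁻_{i+1/2}` between `ρ_i` and `ρ_{i+1}`, so positivity is preserved
for every `θ ≤ 1`. -/
theorem intL_nonneg (hρ : ∀ j, 0 ≤ ρ j) (hθ0 : 0 ≤ θ) (hθ1 : θ ≤ 1) (i : ℤ) :
    0 ≤ intL θ ρ i := by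
  have hm := min_zero_le_minmod3 (ρ i - ρ (i - 1)) ((ρ (i + 1) - ρ (i - 1)) / 2) (ρ (i + 1) - ρ i)
  have hmin : -ρ i ≤ min 0 (ρ (i + 1) - ρ i) :=
    le_min (by linarith [hρ i]) (by linarith [hρ (i + 1)])
  have hθmin : min 0 (ρ (i + 1) - ρ i) ≤ θ * min 0 (ρ (i + 1) - ρ i) := by
    nlinarith [min_le_left 0 (ρ (i + 1) - ρ i)]
  unfold intL slp
  nlinarith [mul_le_mul_of_nonneg_left hm hθ0]

theorem intR_nonneg (hρ : ∀ j, 0 ≤ ρ j) (hθ0 : 0 ≤ θ) (hθ1 : θ ≤ 1) (i : ℤ) :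
    0 ≤ intR θ ρ i := by
  have hm := minmod3_le_max_zero (ρ i - ρ (i - 1)) ((ρ (i + 1) - ρ (i - 1)) / 2) (ρ (i + 1) - ρ i)
  have hmax : max 0 (ρ i - ρ (i - 1)) ≤ ρ i := max_le (hρ i) (by linarith [hρ (i - 1)])
  have hθmax : θ * max 0 (ρ i - ρ (i - 1)) ≤ max 0 (ρ i - ρ (i - 1)) := by
    nlinarith [le_max_left 0 (ρ i - ρ (i - 1))]
  unfold intR slp
  nlinarith [mul_le_mul_of_nonneg_left hm hθ0]

end Reconstruction

theorem abs_midR_add_abs_midL_le {f : ℝ → ℝ → ℝ} {μ : ℝ → ℝ} {θ lam Δx L : ℝ} {ρ : ℤ → ℝ}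
    (hf : ∀ r A, |f r A| ≤ L * |r|) (hlam : 0 ≤ lam) (hρ : ∀ j, 0 ≤ ρ j) (hθ0 : 0 ≤ θ)
    (hθ1 : θ ≤ 1) (i : ℤ) :
    |midR f μ θ lam Δx ρ i| + |midL f μ θ lam Δx ρ i| ≤ 2 * (1 + lam * L) * ρ i := by
  have hL := intL_nonneg hρ hθ0 hθ1 i
  have hR := intR_nonneg hρ hθ0 hθ1 i
  set d := f (intL θ ρ i) (AdiscL μ θ Δx ρ i) - f (intR θ ρ i) (AdiscR μ θ Δx ρ i)
  have hd : |d| ≤ L * (2 * ρ i) := by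
    calc |d| ≤ |f (intL θ ρ i) (AdiscL μ θ Δx ρ i)| + |f (intR θ ρ i) (AdiscR μ θ Δx ρ i)| :=
          abs_sub _ _
      _ ≤ L * intL θ ρ i + L * intR θ ρ i :=
          add_le_add ((hf _ _).trans_eq (by rw [abs_of_nonneg hL]))
            ((hf _ _).trans_eq (by rw [abs_of_nonneg hR]))
      _ = L * (2 * ρ i) := by rw [← mul_add, intL_add_intR]
  have hflux : |lam / 2 * d| ≤ lam * L * ρ i := by
    calc |lam / 2 * d| = lam / 2 * |d| := by rw [abs_mul, abs_of_nonneg (by positivity)]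
      _ ≤ lam / 2 * (L * (2 * ρ i)) := mul_le_mul_of_nonneg_left hd (by positivity)
      _ = lam * L * ρ i := by ring
  have hmR : |midR f μ θ lam Δx ρ i| ≤ intR θ ρ i + |lam / 2 * d| :=
    (abs_sub _ _).trans_eq (by rw [abs_of_nonneg hR])
  have hmL : |midL f μ θ lam Δx ρ i| ≤ intL θ ρ i + |lam / 2 * d| :=
    (abs_sub _ _).trans_eq (by rw [abs_of_nonneg hL])
  linarith [intL_add_intR θ ρ i]

theorem abs_mul_add_mul_le {u v p q K : ℝ} (hu : |u| ≤ K) (hv : |v| ≤ K) :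
    |u * p + v * q| ≤ K * (|p| + |q|) := by
  rw [mul_add]
  refine (abs_add_le _ _).trans (add_le_add ?_ ?_) <;> rw [abs_mul]
  exacts [mul_le_mul_of_nonneg_right hu (abs_nonneg _),
    mul_le_mul_of_nonneg_right hv (abs_nonneg _)]

theorem tsum_sub_two_mul_add {ι : Type*} {a b c : ι → ℝ} (ha : Summable a) (hb : Summable b)
    (hc : Summable c) :
    ∑' i, a i - 2 * ∑' i, b i + ∑' i, c i = ∑' i, (a i - 2 * b i + c i) :=
  (((ha.hasSum.sub (hb.hasSum.mul_left 2)).add hc.hasSum).tsum_eq).symm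

theorem abs_Amid_sub_two_mul_add_le {f : ℝ → ℝ → ℝ} {μ : ℝ → ℝ} {θ lam Δx M C B : ℝ}
    {ρ b : ℤ → ℝ} (hΔx : 0 ≤ Δx) (hμ : ContDiff ℝ 2 μ) (hC : ∀ x, |iteratedDeriv 2 μ x| ≤ C)
    (hμM : ∀ x, |μ x| ≤ M) (hb : HasSum b B)
    (hmid : ∀ l, |midR f μ θ lam Δx ρ l| + |midL f μ θ lam Δx ρ l| ≤ b l) (j : ℤ) :
    |Amid f μ θ lam Δx ρ (j + 1) - 2 * Amid f μ θ lam Δx ρ j + Amid f μ θ lam Δx ρ (j - 1)| ≤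
      Δx / 2 * (C * Δx ^ 2 * B) := by
  set p := midR f μ θ lam Δx ρ
  set q := midL f μ θ lam Δx ρ
  set w : ℤ → ℤ → ℝ := fun i l =>
    μ (((i : ℝ) + 1 - (l : ℝ)) * Δx) * p l + μ (((i : ℝ) - (l : ℝ)) * Δx) * q l with hw
  have hM : 0 ≤ M := (abs_nonneg _).trans (hμM 0)
  have hC0 : 0 ≤ C := (abs_nonneg _).trans (hC 0)
  have hsummable : ∀ i, Summable (w i) := fun i =>
    (hb.summable.mul_left M).of_norm_bounded fun l =>
      (abs_mul_add_mul_le (hμM _) (hμM _)).trans (mul_le_mul_of_nonneg_left (hmid l) hM)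
  have hsecond : ∀ l, ‖w (j + 1) l - 2 * w j l + w (j - 1) l‖ ≤ C * Δx ^ 2 * b l := by
    intro l
    set x := ((j : ℝ) + 1 - l) * Δx
    set y := ((j : ℝ) - l) * Δx
    have hsplit : w (j + 1) l - 2 * w j l + w (j - 1) l =
        (μ (x + Δx) - 2 * μ x + μ (x - Δx)) * p l + (μ (y + Δx) - 2 * μ y + μ (y - Δx)) * q l := by
      simp only [hw, x, y]
      push_cast
      ring_nf
    rw [Real.norm_eq_abs, hsplit]
    exact (abs_mul_add_mul_le (abs_sub_two_mul_add_le hμ hC x Δx)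
      (abs_sub_two_mul_add_le hμ hC y Δx)).trans
      (mul_le_mul_of_nonneg_left (hmid l) (by positivity))
  have hAmid : Amid f μ θ lam Δx ρ (j + 1) - 2 * Amid f μ θ lam Δx ρ j +
      Amid f μ θ lam Δx ρ (j - 1) = Δx / 2 * ∑' l, (w (j + 1) l - 2 * w j l + w (j - 1) l) := by
    rw [← tsum_sub_two_mul_add (hsummable _) (hsummable _) (hsummable _)]
    show Δx / 2 * ∑' l, w (j + 1) l - 2 * (Δx / 2 * ∑' l, w j l) + Δx / 2 * ∑' l, w (j - 1) l = _
    ring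
  rw [hAmid, abs_mul, abs_of_nonneg (by positivity)]
  exact mul_le_mul_of_nonneg_left (tsum_of_norm_bounded (hb.mul_left _) hsecond) (by positivity)

/-- second-difference bound on the mid-time convolutions. -/
theorem stmt18 (f : ℝ → ℝ → ℝ) (μ : ℝ → ℝ) (Δx Δt lam θ L Cμ'' : ℝ)
    (hΔx : 0 < Δx) (hΔt : 0 < Δt) (hlam : lam = Δt / Δx)
    (hθ0 : 0 ≤ θ) (hθ1 : θ ≤ 1 / 2)
    (hf : ContDiff ℝ 2 (Function.uncurry f)) (hf0 : ∀ A : ℝ, f 0 A = 0)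
    (hL : ∀ r A : ℝ, |deriv (fun x => f x A) r| ≤ L)
    (hμ : ContDiff ℝ 2 μ) (hμc : HasCompactSupport μ)
    (hCμ'' : ∀ x : ℝ, |iteratedDeriv 2 μ x| ≤ Cμ'')
    (ρ : ℤ → ℝ) (hρ : ∀ j : ℤ, 0 ≤ ρ j) (hsum : Summable ρ) (j : ℤ) :
    |Amid f μ θ lam Δx ρ (j + 1) - 2 * Amid f μ θ lam Δx ρ j +
        Amid f μ θ lam Δx ρ (j - 1)| ≤
      Δx ^ 2 * Cμ'' * (1 + θ) * (1 + lam * L) * (Δx * ∑' l : ℤ, ρ l) := by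
  have hlam0 : 0 ≤ lam := hlam ▸ by positivity
  have hL0 : 0 ≤ L := (abs_nonneg _).trans (hL 0 0)
  have hC0 : 0 ≤ Cμ'' := (abs_nonneg _).trans (hCμ'' 0)
  have hflux : ∀ r A, |f r A| ≤ L * |r| := fun r A => by
    have hfA : Differentiable ℝ (fun x => f x A) :=
      (hf.differentiable (by norm_num)).comp (differentiable_id.prodMk (differentiable_const A))
    simpa [hf0] using abs_sub_le_mul_of_abs_deriv_le hfA (hL · A) r 0
  obtain ⟨M, hM⟩ := hμ.continuous.bounded_above_of_compact_support hμc
  have hsecond := abs_Amid_sub_two_mul_add_le hΔx.le hμ hCμ'' hM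
    (hsum.hasSum.mul_left (2 * (1 + lam * L)))
    (abs_midR_add_abs_midL_le hflux hlam0 hρ hθ0 (by linarith)) j
  have hrest : 0 ≤ Δx ^ 3 * Cμ'' * (1 + lam * L) * ∑' l, ρ l := by
    have : 0 ≤ ∑' l, ρ l := tsum_nonneg hρ
    positivity
  nlinarith [mul_nonneg hθ0 hrest]
end
end
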